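/- Fix 1/2 < p ≤ 1 and k ∈ ℕ. Let M_k be the k×k symmetric matrix with diagonal entries M_k(i,i) = −2p/(2p−1) and off-diagonal entries M_k(i,j) = ((1−p)/p)^{|i−j|−1} for i ≠ j. Then det(M_k) = (−1)^k · (k(2p−1)+1)/(2p−1)^k. -/

import Mathlib

open MeasureTheory Filter Finset Matrix
open scoped ENNReal
noncomputable section

/-- The matrix `M_k` : diagonal entries `−2p/(2p−1)` and off-diagonal entries
`((1−p)/p)^{|i−j|−1}`. -/
def Mmat (p : ℝ) (k : ℕ) : Matrix (Fin k) (Fin k) ℝ := fun i j =>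
  if i = j then -(2 * p) / (2 * p - 1)
  else ((1 - p) / p) ^ (((i : ℤ) - (j : ℤ)).natAbs - 1)

namespace MmatAux

set_option linter.unreachableTactic false
set_option linter.unusedTactic false

/-- Elimination matrix: identity plus `-q` on the superdiagonal. -/
def E (p : ℝ) (k : ℕ) : Matrix (Fin k) (Fin k) ℝ := fun i j =>
  if i = j then 1 else if (j : ℕ) = (i : ℕ) + 1 then -((1 - p) / p) else 0

/-- Tridiagonal matrix: diagonal `-2/(2p-1)` except last entry `-2p/(2p-1)`,
off-diagonal `1/(2p-1)`. -/
def W (p : ℝ) (n : ℕ) : Matrix (Fin n) (Fin n) ℝ := fun i j =>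
  if i = j then (if (i : ℕ) + 1 = n then -(2 * p) / (2 * p - 1) else -2 / (2 * p - 1))
  else if ((i : ℤ) - (j : ℤ)).natAbs = 1 then 1 / (2 * p - 1) else 0

lemma det_E (p : ℝ) (k : ℕ) : (E p k).det = 1 := by
  rw [Matrix.det_of_upperTriangular]
  · simp [E]
  · intro i j h
    simp only [id] at h
    have h1 : ¬ i = j := by exact fun e => absurd e (by rintro rfl; exact lt_irrefl _ h)
    have h2 : ¬ (j : ℕ) = (i : ℕ) + 1 := by
      have := Fin.lt_def.mp h
      omega
    simp [E, h1, h2]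

lemma E_mul_apply (p : ℝ) (k : ℕ) (X : Matrix (Fin k) (Fin k) ℝ) (i j : Fin k) :
    (E p k * X) i j = X i j -
      ((1 - p) / p) * (if h : (i : ℕ) + 1 < k then X ⟨(i : ℕ) + 1, h⟩ j else 0) := by
  rw [Matrix.mul_apply]
  by_cases h : (i : ℕ) + 1 < k
  · rw [dif_pos h]
    have : ∀ l : Fin k, E p k i l * X l j =
        (if l = i then X l j else 0) +
        (if l = (⟨(i : ℕ) + 1, h⟩ : Fin k) then -((1 - p) / p) * X l j else 0) := by
      intro l
      rcases eq_or_ne l i with rfl | hl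
      · have : ¬ l = (⟨(l : ℕ) + 1, h⟩ : Fin k) := by
          intro e; have := congrArg Fin.val e; simp at this
        simp [E, this]
      · rcases eq_or_ne l (⟨(i : ℕ) + 1, h⟩ : Fin k) with rfl | hl2
        · have hli : ¬ i = (⟨(i : ℕ) + 1, h⟩ : Fin k) := by
            intro e; have := congrArg Fin.val e; simp at this
          simp [E, Ne.symm hl, hl, hli]
        · have : ¬ (l : ℕ) = (i : ℕ) + 1 := by
            intro e; exact hl2 (Fin.ext (by simpa using e))
          simp [E, Ne.symm hl, hl, hl2, this]
    rw [Finset.sum_congr rfl (fun l _ => this l), Finset.sum_add_distrib,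
      Finset.sum_ite_eq' Finset.univ i, Finset.sum_ite_eq' Finset.univ]
    simp; ring
  · rw [dif_neg h]
    have : ∀ l : Fin k, E p k i l * X l j = (if l = i then X l j else 0) := by
      intro l
      rcases eq_or_ne l i with rfl | hl
      · simp [E]
      · have : ¬ (l : ℕ) = (i : ℕ) + 1 := by
          intro e; exact h (e ▸ l.isLt)
        simp [E, Ne.symm hl, hl, this]
    rw [Finset.sum_congr rfl (fun l _ => this l), Finset.sum_ite_eq' Finset.univ i]
    simp

lemma mul_Et_apply (p : ℝ) (k : ℕ) (X : Matrix (Fin k) (Fin k) ℝ) (i j : Fin k) :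
    (X * (E p k)ᵀ) i j = X i j -
      ((1 - p) / p) * (if h : (j : ℕ) + 1 < k then X i ⟨(j : ℕ) + 1, h⟩ else 0) := by
  have : X * (E p k)ᵀ = (E p k * Xᵀ)ᵀ := by
    rw [Matrix.transpose_mul, Matrix.transpose_transpose]
  rw [this, Matrix.transpose_apply, E_mul_apply]
  simp only [Matrix.transpose_apply]

lemma Mmat_diag (p : ℝ) (k : ℕ) (i j : Fin k) (h : (i : ℕ) = (j : ℕ)) :
    Mmat p k i j = -(2 * p) / (2 * p - 1) := by
  simp [Mmat, Fin.ext h]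

lemma Mmat_off (p : ℝ) (k : ℕ) (i j : Fin k) (m : ℕ)
    (hm : ((i : ℤ) - (j : ℤ)).natAbs = m + 1) :
    Mmat p k i j = ((1 - p) / p) ^ m := by
  have hne : i ≠ j := by intro e; subst e; omega
  simp [Mmat, hne, hm]

lemma EME (p : ℝ) (hp0 : p ≠ 0) (hr : 2 * p - 1 ≠ 0) (k : ℕ) :
    E p k * Mmat p k * (E p k)ᵀ = W p k := by
  ext i j
  rw [mul_Et_apply]
  simp only [E_mul_apply]
  by_cases hij : (i : ℕ) = (j : ℕ)
  · have hIJ : i = j := Fin.ext hij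
    subst hIJ
    by_cases hi : (i : ℕ) + 1 < k
    · rw [dif_pos hi, dif_pos hi, dif_pos hi,
        Mmat_diag p k i i rfl,
        Mmat_off p k ⟨(i:ℕ)+1, hi⟩ i 0 (by simp only [Fin.val_mk]; omega),
        Mmat_off p k i ⟨(i:ℕ)+1, hi⟩ 0 (by simp only [Fin.val_mk]; omega),
        Mmat_diag p k ⟨(i:ℕ)+1, hi⟩ ⟨(i:ℕ)+1, hi⟩ rfl]
      have hW : W p k i i = -2 / (2 * p - 1) := by
        have h1 : ¬ ((i : ℕ) + 1 = k) := by omega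
        simp [W, h1]
      rw [hW]
      field_simp
      try ring
      try exact Or.inl (by ring)
    · rw [dif_neg hi, dif_neg hi, Mmat_diag p k i i rfl]
      have hik : (i : ℕ) + 1 = k := by omega
      simp [W, hik]
  · by_cases hji : (j : ℕ) = (i : ℕ) + 1
    · have hi : (i : ℕ) + 1 < k := hji ▸ j.isLt
      have h1 : ¬ i = j := fun e => hij (congrArg Fin.val e)
      have h2 : ((i : ℤ) - (j : ℤ)).natAbs = 1 := by omega
      have hW : W p k i j = 1 / (2 * p - 1) := by simp [W, h1, h2]
      rw [dif_pos hi]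
      by_cases hj : (j : ℕ) + 1 < k
      · rw [dif_pos hj, dif_pos hi,
          Mmat_off p k i j 0 (by omega),
          Mmat_diag p k ⟨(i:ℕ)+1, hi⟩ j (by simp only [Fin.val_mk]; omega),
          Mmat_off p k i ⟨(j:ℕ)+1, hj⟩ 1 (by simp only [Fin.val_mk]; omega),
          Mmat_off p k ⟨(i:ℕ)+1, hi⟩ ⟨(j:ℕ)+1, hj⟩ 0 (by simp only [Fin.val_mk]; omega),
          hW]
        field_simp
        try ring
        try exact Or.inl (by ring)
        linear_combination (-(p ^ 2)) * (inv_mul_cancel₀ (show (-1 + p * 2 : ℝ) ≠ 0 by contrapose! hr; linarith))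
      · rw [dif_neg hj,
          Mmat_off p k i j 0 (by omega),
          Mmat_diag p k ⟨(i:ℕ)+1, hi⟩ j (by simp only [Fin.val_mk]; omega),
          hW]
        field_simp
        try ring
        try exact Or.inl (by ring)
        linear_combination (-(p)) * (inv_mul_cancel₀ (show (-1 + p * 2 : ℝ) ≠ 0 by contrapose! hr; linarith))
    · by_cases hij2 : (i : ℕ) = (j : ℕ) + 1
      · have hj : (j : ℕ) + 1 < k := hij2 ▸ i.isLt
        have h1 : ¬ i = j := fun e => hij (congrArg Fin.val e)
        have h2 : ((i : ℤ) - (j : ℤ)).natAbs = 1 := by omega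
        have hW : W p k i j = 1 / (2 * p - 1) := by simp [W, h1, h2]
        rw [dif_pos hj]
        by_cases hi : (i : ℕ) + 1 < k
        · rw [dif_pos hi, dif_pos hi,
            Mmat_off p k i j 0 (by omega),
            Mmat_off p k ⟨(i:ℕ)+1, hi⟩ j 1 (by simp only [Fin.val_mk]; omega),
            Mmat_diag p k i ⟨(j:ℕ)+1, hj⟩ (by simp only [Fin.val_mk]; omega),
            Mmat_off p k ⟨(i:ℕ)+1, hi⟩ ⟨(j:ℕ)+1, hj⟩ 0 (by simp only [Fin.val_mk]; omega),
            hW]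
          field_simp
          try ring
          try exact Or.inl (by ring)
          linear_combination (-(p ^ 2)) * (inv_mul_cancel₀ (show (-1 + p * 2 : ℝ) ≠ 0 by contrapose! hr; linarith))
        · rw [dif_neg hi, dif_neg hi,
            Mmat_off p k i j 0 (by omega),
            Mmat_diag p k i ⟨(j:ℕ)+1, hj⟩ (by simp only [Fin.val_mk]; omega),
            hW]
          field_simp
          try ring
          try exact Or.inl (by ring)
          linear_combination (-(p ^ 2)) * (inv_mul_cancel₀ (show (-1 + p * 2 : ℝ) ≠ 0 by contrapose! hr; linarith))
      · have h1 : ¬ i = j := fun e => hij (congrArg Fin.val e)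
        have h2 : ¬ ((i : ℤ) - (j : ℤ)).natAbs = 1 := by omega
        have hW : W p k i j = 0 := by simp [W, h1, h2]
        rw [hW]
        rcases lt_or_gt_of_ne (fun e => hij e : (i:ℕ) ≠ (j:ℕ)) with hlt | hgt
        · -- j ≥ i + 2
          obtain ⟨n, hn⟩ : ∃ n, (j : ℕ) = (i : ℕ) + 2 + n := ⟨(j:ℕ) - (i:ℕ) - 2, by omega⟩
          have hi : (i : ℕ) + 1 < k := by have := j.isLt; omega
          rw [dif_pos hi]
          by_cases hj : (j : ℕ) + 1 < k
          · rw [dif_pos hj, dif_pos hi,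
              Mmat_off p k i j (n+1) (by omega),
              Mmat_off p k ⟨(i:ℕ)+1, hi⟩ j n (by simp only [Fin.val_mk]; omega),
              Mmat_off p k i ⟨(j:ℕ)+1, hj⟩ (n+2) (by simp only [Fin.val_mk]; omega),
              Mmat_off p k ⟨(i:ℕ)+1, hi⟩ ⟨(j:ℕ)+1, hj⟩ (n+1) (by simp only [Fin.val_mk]; omega)]
            ring
          · rw [dif_neg hj,
              Mmat_off p k i j (n+1) (by omega),
              Mmat_off p k ⟨(i:ℕ)+1, hi⟩ j n (by simp only [Fin.val_mk]; omega)]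
            ring
        · -- i ≥ j + 2
          obtain ⟨n, hn⟩ : ∃ n, (i : ℕ) = (j : ℕ) + 2 + n := ⟨(i:ℕ) - (j:ℕ) - 2, by omega⟩
          have hj : (j : ℕ) + 1 < k := by have := i.isLt; omega
          rw [dif_pos hj]
          by_cases hi : (i : ℕ) + 1 < k
          · rw [dif_pos hi, dif_pos hi,
              Mmat_off p k i j (n+1) (by omega),
              Mmat_off p k ⟨(i:ℕ)+1, hi⟩ j (n+2) (by simp only [Fin.val_mk]; omega),
              Mmat_off p k i ⟨(j:ℕ)+1, hj⟩ n (by simp only [Fin.val_mk]; omega),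
              Mmat_off p k ⟨(i:ℕ)+1, hi⟩ ⟨(j:ℕ)+1, hj⟩ (n+1) (by simp only [Fin.val_mk]; omega)]
            ring
          · rw [dif_neg hi, dif_neg hi,
              Mmat_off p k i j (n+1) (by omega),
              Mmat_off p k i ⟨(j:ℕ)+1, hj⟩ n (by simp only [Fin.val_mk]; omega)]
            ring


def Wf (p : ℝ) (n a b : ℕ) : ℝ :=
  if a = b then (if a + 1 = n then -(2 * p) / (2 * p - 1) else -2 / (2 * p - 1))
  else if ((a : ℤ) - (b : ℤ)).natAbs = 1 then 1 / (2 * p - 1) else 0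

lemma W_eq (p : ℝ) (n : ℕ) (i j : Fin n) : W p n i j = Wf p n (i : ℕ) (j : ℕ) := by
  unfold W Wf
  simp [Fin.ext_iff]

lemma Wf_succ (p : ℝ) (n a b : ℕ) : Wf p (n + 1) (a + 1) (b + 1) = Wf p n a b := by
  unfold Wf
  by_cases h : a = b
  · subst h; simp
  · have h' : ¬ (a + 1 = b + 1) := by omega
    have h3 : (((a : ℕ) + 1 : ℤ) - ((b : ℕ) + 1 : ℤ)).natAbs = ((a : ℤ) - (b : ℤ)).natAbs := by
      omega
    simp only [if_neg h, if_neg h']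
    push_cast
    rw [h3]

lemma detW_rec (p : ℝ) (n : ℕ) :
    (W p (n + 2)).det = (-2 / (2 * p - 1)) * (W p (n + 1)).det
      - (1 / (2 * p - 1)) ^ 2 * (W p n).det := by
  rw [show ((n:ℕ) + 2) = (n+1) + 1 from rfl]
  rw [Matrix.det_succ_row_zero, Fin.sum_univ_succ, Fin.sum_univ_succ]
  have hW00 : W p (n+1+1) 0 0 = -2 / (2 * p - 1) := by
    rw [W_eq]; unfold Wf; norm_num
  have hW01 : W p (n+1+1) 0 (Fin.succ 0) = 1 / (2 * p - 1) := by
    rw [W_eq]; unfold Wf; norm_num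
  have hW0rest : ∀ j : Fin n, W p (n+1+1) 0 (Fin.succ (Fin.succ j)) = 0 := by
    intro j
    rw [W_eq]; unfold Wf
    have h1 : ¬ (((0 : Fin (n+1+1)) : ℕ) = ((Fin.succ (Fin.succ j)) : ℕ)) := by simp
    have h2 : ¬ ((((0 : Fin (n+1+1)) : ℕ) : ℤ)
        - (((Fin.succ (Fin.succ j)) : ℕ) : ℤ)).natAbs = 1 := by
      simp only [Fin.val_succ, Fin.val_zero]; omega
    rw [if_neg h1, if_neg h2]
  have hsub0 : (W p (n+1+1)).submatrix Fin.succ (Fin.succAbove 0) = W p (n+1) := by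
    ext i j
    rw [Matrix.submatrix_apply, Fin.succAbove_zero, W_eq, W_eq, Fin.val_succ, Fin.val_succ,
      Wf_succ]
  have hsub1 : ((W p (n+1+1)).submatrix Fin.succ (Fin.succAbove 1)).det
      = (1 / (2 * p - 1)) * (W p n).det := by
    rw [Matrix.det_succ_column_zero, Fin.sum_univ_succ]
    have hA : ((1 : Fin (n+1+1)).succAbove (0 : Fin (n+1))) = 0 := by
      rw [Fin.succAbove_of_castSucc_lt]
      · rfl
      · simp [Fin.lt_def]
    have hB : ∀ m : Fin n, (1 : Fin (n+1+1)).succAbove (Fin.succ m) = Fin.succ (Fin.succ m) := by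
      intro m
      rw [Fin.succAbove_of_le_castSucc]
      simp [Fin.le_def]
    have hS00 : (W p (n+1+1)).submatrix Fin.succ (Fin.succAbove 1) 0 0 = 1/(2*p-1) := by
      rw [Matrix.submatrix_apply, hA, W_eq]
      unfold Wf
      norm_num
    have hrest : ∀ i : Fin n,
        (W p (n+1+1)).submatrix Fin.succ (Fin.succAbove 1) (Fin.succ i) 0 = 0 := by
      intro i
      rw [Matrix.submatrix_apply, hA, W_eq]
      unfold Wf
      have h1 : ¬ (((Fin.succ (Fin.succ i)) : ℕ) = ((0 : Fin (n+1+1)) : ℕ)) := by simp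
      have h2 : ¬ (((((Fin.succ (Fin.succ i)) : ℕ)) : ℤ)
          - (((0 : Fin (n+1+1)) : ℕ) : ℤ)).natAbs = 1 := by
        simp only [Fin.val_succ, Fin.val_zero]; omega
      rw [if_neg h1, if_neg h2]
    have hinner : ((W p (n+1+1)).submatrix Fin.succ (Fin.succAbove 1)).submatrix
        (Fin.succAbove (0 : Fin (n+1))) Fin.succ = W p n := by
      ext i j
      simp only [Matrix.submatrix_apply, Fin.succAbove_zero]
      rw [hB, W_eq, W_eq]
      simp only [Fin.val_succ]
      rw [Wf_succ, Wf_succ]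
    rw [hS00, hinner]
    simp only [hrest, zero_mul, mul_zero, Finset.sum_const_zero]
    simp
  rw [hW01, Fin.succ_zero_eq_one, hsub1, hsub0, hW00]
  simp only [hW0rest, zero_mul, mul_zero, Finset.sum_const_zero]
  simp only [Fin.val_zero, Fin.val_one, pow_zero, pow_one, one_mul, add_zero]
  ring


lemma detW (p : ℝ) (hr : 2 * p - 1 ≠ 0) :
    ∀ n : ℕ, (W p n).det = (-1) ^ n * ((n : ℝ) * (2 * p - 1) + 1) / (2 * p - 1) ^ n := by
  intro n
  induction n using Nat.strong_induction_on with
  | _ n ih =>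
    match n with
    | 0 => simp [Matrix.det_fin_zero]
    | 1 =>
      rw [Matrix.det_fin_one]
      show W p 1 0 0 = _
      rw [W_eq]
      unfold Wf
      norm_num
      try field_simp
      try ring
    | (m + 2) =>
      rw [detW_rec, ih (m + 1) (by omega), ih m (by omega)]
      push_cast
      field_simp
      ring

end MmatAux

open MmatAux in
/-- `det M_k = (−1)^k (k(2p−1)+1)/(2p−1)^k`. -/
theorem Mmat_det (p : ℝ) (hp : 1 / 2 < p) (hp1 : p ≤ 1) (k : ℕ) :
    (Mmat p k).det = (-1) ^ k * ((k : ℝ) * (2 * p - 1) + 1) / (2 * p - 1) ^ k := by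
  have hr : 2 * p - 1 ≠ 0 := by
    have : 0 < 2 * p - 1 := by linarith
    exact ne_of_gt this
  have hp0 : p ≠ 0 := by
    have : 0 < p := by linarith
    exact ne_of_gt this
  have h := congrArg Matrix.det (EME p hp0 hr k)
  rw [Matrix.det_mul, Matrix.det_mul, det_E, Matrix.det_transpose, det_E, one_mul, mul_one] at h
  rw [h, detW p hr k]
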